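/- arXiv:1603.01246 — 13 statements merged into one kernel-verified Lean document; each statement's English description precedes it below -/
import Mathlib

section
/- Let n ≥ 2 and let M be an n-Metric on a set X. For all tuples (x_1,…,x_n), (y_1,…,y_n) ∈ X^n and every t ∈ {1,…,n}: M(x_1,…,x_n) ≤ M(y_1,…,y_t, x_{t+1},…,x_n) + Σ_{j=1}^{t} M(y_j,…,y_j, x_j), where M(y_j,…,y_j, x_j) denotes M evaluated at the n-tuple with n−1 copies of y_j and one copy of x_j. -/
/-- The `n`-tuple with `n − 1` copies of `a` and `b` in the last coordinate. -/
def repl {X : Type*} {n : ℕ} (a b : X) : Fin n → X :=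
  fun i => if i.val = n - 1 then b else a

/-- `M` is an n-𝔐etric on `X` (for `2 ≤ n`). -/
def IsNMetric {X : Type*} {n : ℕ} (hn : 2 ≤ n) (M : (Fin n → X) → ℝ) : Prop :=
  (∀ x₁ x₂ : X, 0 ≤ M (repl x₁ x₂)) ∧
  (∀ (x : Fin n → X) (σ : Equiv.Perm (Fin n)), M (x ∘ σ) = M x) ∧
  (∀ x₁ x₂ : X, M (repl x₁ x₂) = 0 ↔ x₁ = x₂) ∧
  (∀ (x : Fin n → X) (a : X),
    M x ≤ M (Function.update x ⟨n - 1, by omega⟩ a) + M (repl a (x ⟨n - 1, by omega⟩)))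

/-- The triangle-type inequality holds at any coordinate, by symmetry. -/
lemma nMetric_update {X : Type*} {n : ℕ} (hn : 2 ≤ n)
    (M : (Fin n → X) → ℝ) (hM : IsNMetric hn M)
    (x : Fin n → X) (i : Fin n) (a : X) :
    M x ≤ M (Function.update x i a) + M (repl a (x i)) := by
  obtain ⟨_, hsym, _, hineq⟩ := hM
  set last : Fin n := ⟨n - 1, by omega⟩
  set σ : Equiv.Perm (Fin n) := Equiv.swap i last
  have h1 : M x = M (x ∘ σ) := (hsym x σ).symm
  have h2 := hineq (x ∘ σ) a
  have hlast : (x ∘ σ) last = x i := by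
    simp [σ, Equiv.swap_apply_right]
  have hupd : Function.update (x ∘ σ) last a = (Function.update x i a) ∘ σ := by
    funext j
    by_cases hj : j = last
    · subst hj
      rw [Function.update_self, Function.comp_apply,
        show σ last = i from Equiv.swap_apply_right i last, Function.update_self]
    · have : σ j ≠ i := by
        intro h
        apply hj
        have := σ.injective (a₂ := σ.symm i) (by simpa using h)
        simpa [σ, Equiv.swap_apply_left] using this
      simp [Function.update_of_ne hj, Function.update_of_ne this]
  rw [h1, ← hlast, ← hsym (Function.update x i a) σ, ← hupd]
  exact h2

/-- Term replacement: `M(x₁,…,xₙ) ≤ M(y₁,…,y_t,x_{t+1},…,xₙ) + Σ_{j=1}^t M(y_j,…,y_j,x_j)`. -/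
theorem nMetric_term_replacement {X : Type*} {n : ℕ} (hn : 2 ≤ n)
    (M : (Fin n → X) → ℝ) (hM : IsNMetric hn M)
    (x y : Fin n → X) (t : ℕ) (ht1 : 1 ≤ t) (ht2 : t ≤ n) :
    M x ≤ M (fun i => if i.val < t then y i else x i) +
      ∑ j ∈ Finset.univ.filter (fun j : Fin n => j.val < t), M (repl (y j) (x j)) := by
  clear ht1
  induction t with
  | zero =>
    simp
  | succ t ih =>
    have ht : t < n := ht2
    have ih' := ih (le_of_lt ht)
    set z : Fin n → X := fun i => if i.val < t then y i else x i with hz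
    have step := nMetric_update hn M hM z ⟨t, ht⟩ (y ⟨t, ht⟩)
    have hzt : z ⟨t, ht⟩ = x ⟨t, ht⟩ := by simp [hz]
    have hupd : Function.update z ⟨t, ht⟩ (y ⟨t, ht⟩) =
        (fun i => if i.val < t + 1 then y i else x i) := by
      funext j
      by_cases hj : j = ⟨t, ht⟩
      · subst hj; simp
      · have hjv : j.val ≠ t := fun h => hj (Fin.ext h)
        rw [Function.update_of_ne hj]
        have hiff : (j.val < t + 1) ↔ (j.val < t) := by omega
        simp only [hz]
        rw [if_congr hiff rfl rfl]
    have hsum : (Finset.univ.filter (fun j : Fin n => j.val < t + 1)) =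
        insert ⟨t, ht⟩ (Finset.univ.filter (fun j : Fin n => j.val < t)) := by
      ext j
      simp [Finset.mem_insert, Fin.ext_iff]
      omega
    rw [hsum, Finset.sum_insert (by simp)]
    rw [hzt, hupd] at step
    calc M x ≤ M z + ∑ j ∈ Finset.univ.filter (fun j : Fin n => j.val < t),
          M (repl (y j) (x j)) := ih'
      _ ≤ _ := by linarith
end

section
/- Let n ≥ 2 and let M be an n-Metric on a set X. For all a, b ∈ X and every t ∈ {1,…,n}: M(a,…,a,b,…,b) ≤ t·M(b,…,b,a), where the left side has t copies of a and n−t copies of b, and M(b,…,b,a) has n−1 copies of b and one copy of a. In particular, taking t = n−1, M(a,…,a,b) ≤ (n−1)·M(b,…,b,a). -/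
/-- `M(a,…,a,b,…,b) ≤ t·M(b,…,b,a)` (with `t` copies of `a` and `n−t` of `b`);
in particular (`t = n−1`), `M(a,…,a,b) ≤ (n−1)·M(b,…,b,a)`. -/
theorem nMetric_swap_bound {X : Type*} {n : ℕ} (hn : 2 ≤ n)
    (M : (Fin n → X) → ℝ) (hM : IsNMetric hn M) (a b : X) :
    (∀ t : ℕ, 1 ≤ t → t ≤ n →
      M (fun i => if i.val < t then a else b) ≤ (t : ℝ) * M (repl b a)) ∧
    M (repl a b) ≤ ((n : ℝ) - 1) * M (repl b a) := by
  obtain ⟨hpos, hsym, hsep, hinq⟩ := hM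
  have hlast : n - 1 < n := by omega
  have key : ∀ t : ℕ, 1 ≤ t → t ≤ n →
      M (fun i => if i.val < t then a else b) ≤ (t : ℝ) * M (repl b a) := by
    intro t
    induction t with
    | zero => intro h; omega
    | succ t ih =>
      intro _ ht
      rcases Nat.eq_zero_or_pos t with rfl | htpos
      · -- base case t + 1 = 1
        have hσ : (fun i : Fin n => if i.val < 0 + 1 then a else b) ∘
            (Equiv.swap ⟨0, by omega⟩ ⟨n - 1, hlast⟩) = repl b a := by
          funext i
          simp only [Function.comp_apply, repl, Equiv.swap_apply_def]
          split_ifs <;> simp_all [Fin.ext_iff]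
        have := hsym (fun i : Fin n => if i.val < 0 + 1 then a else b)
          (Equiv.swap ⟨0, by omega⟩ ⟨n - 1, hlast⟩)
        rw [hσ] at this
        rw [← this]
        simp
      · -- inductive step
        set σ := Equiv.swap (⟨t, by omega⟩ : Fin n) (⟨n - 1, hlast⟩ : Fin n) with hσdef
        set x := (fun i : Fin n => if i.val < t + 1 then a else b) ∘ σ with hx
        have hsymx : M x = M (fun i : Fin n => if i.val < t + 1 then a else b) :=
          hsym _ σ
        have hxlast : x ⟨n - 1, hlast⟩ = a := by
          simp only [hx, Function.comp_apply, hσdef, Equiv.swap_apply_right]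
          simp
        have hupd : Function.update x ⟨n - 1, by omega⟩ b =
            (fun i : Fin n => if i.val < t then a else b) := by
          funext i
          rcases eq_or_ne i (⟨n - 1, hlast⟩ : Fin n) with rfl | hi
          · rw [Function.update_self, if_neg (by omega : ¬ (n - 1 < t))]
          · rw [Function.update_of_ne hi]
            simp only [hx, Function.comp_apply, hσdef, Equiv.swap_apply_def]
            split_ifs <;> simp_all [Fin.ext_iff] <;> omega
        have hineq := hinq x b
        rw [hxlast, hupd] at hineq
        have hih := ih (by omega) (by omega)
        have hpos' := hpos b a
        calc M (fun i : Fin n => if i.val < t + 1 then a else b)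
            = M x := hsymx.symm
          _ ≤ M (fun i : Fin n => if i.val < t then a else b) + M (repl b a) := hineq
          _ ≤ (t : ℝ) * M (repl b a) + M (repl b a) := by linarith
          _ = ((t + 1 : ℕ) : ℝ) * M (repl b a) := by push_cast; ring
  refine ⟨key, ?_⟩
  have h1 : repl a b = (fun i : Fin n => if i.val < n - 1 then a else b) := by
    funext i
    simp only [repl]
    split_ifs <;> first | rfl | omega
  have h2 := key (n - 1) (by omega) (by omega)
  rw [h1]
  calc M (fun i : Fin n => if i.val < n - 1 then a else b)
      ≤ ((n - 1 : ℕ) : ℝ) * M (repl b a) := h2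
    _ = ((n : ℝ) - 1) * M (repl b a) := by
        rw [Nat.cast_sub (by omega)]; norm_num
end

section
/- Let n ≥ 2 and let M be an n-Metric on a set X. Define d : X × X → ℝ by d(x,y) = M(y, x,…,x) + M(x, y,…,y), where each term has n−1 copies of the repeated point. Then d is a metric on X. -/
/-- The `n`-tuple `(b, a, …, a)` with `n − 1` copies of `a`. -/
def headRepl {X : Type*} {n : ℕ} (b a : X) : Fin n → X :=
  fun i => if i.val = 0 then b else a

lemma headRepl_eq_repl_comp {X : Type*} {n : ℕ} (hn : 2 ≤ n) (b a : X) :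
    (headRepl b a : Fin n → X) ∘
      (Equiv.swap ⟨0, by omega⟩ ⟨n - 1, by omega⟩) = repl a b := by
  have hne : (0 : ℕ) ≠ n - 1 := by omega
  funext i
  simp only [Function.comp, headRepl, repl]
  rcases eq_or_ne i ⟨0, by omega⟩ with h | h0
  · subst h
    rw [Equiv.swap_apply_left]
    simp [hne, hne.symm]
  · rcases eq_or_ne i ⟨n - 1, by omega⟩ with h | h1
    · subst h
      rw [Equiv.swap_apply_right]
      simp
    · rw [Equiv.swap_apply_of_ne_of_ne h0 h1]
      have h0' : (i : ℕ) ≠ 0 := fun h => h0 (Fin.ext h)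
      have h1' : (i : ℕ) ≠ n - 1 := fun h => h1 (Fin.ext h)
      simp [h0', h1']

/-- An n-𝔐etric induces a metric via `d(x,y) = M(y,x,…,x) + M(x,y,…,y)`. -/
theorem nMetric_induces_metric {X : Type*} {n : ℕ} (hn : 2 ≤ n)
    (M : (Fin n → X) → ℝ) (hM : IsNMetric hn M)
    (d : X → X → ℝ) (hd : ∀ x y, d x y = M (headRepl y x) + M (headRepl x y)) :
    (∀ x y, 0 ≤ d x y) ∧
    (∀ x y, d x y = d y x) ∧
    (∀ x y, d x y = 0 ↔ x = y) ∧
    (∀ x y z, d x y ≤ d x z + d z y) := by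
  obtain ⟨hpos, hsym, hsep, hinq⟩ := hM
  have hh : ∀ a b : X, M (headRepl b a) = M (repl a b) := by
    intro a b
    rw [← hsym (headRepl b a) (Equiv.swap ⟨0, by omega⟩ ⟨n - 1, by omega⟩),
      headRepl_eq_repl_comp hn]
  have hd' : ∀ x y, d x y = M (repl x y) + M (repl y x) := by
    intro x y; rw [hd, hh, hh]
  -- triangle core
  have htri : ∀ x y z : X, M (repl x y) ≤ M (repl x z) + M (repl z y) := by
    intro x y z
    have h := hinq (repl x y) z
    have e1 : (repl x y : Fin n → X) ⟨n - 1, by omega⟩ = y := by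
      simp [repl]
    have e2 : Function.update (repl x y) (⟨n - 1, by omega⟩ : Fin n) z = repl x z := by
      funext i
      rcases eq_or_ne i ⟨n - 1, by omega⟩ with h' | h'
      · subst h'; simp [repl]
      · rw [Function.update_of_ne h']
        have hv : (i : ℕ) ≠ n - 1 := by simpa [Fin.ext_iff] using h'
        simp [repl, hv]
    rw [e1, e2] at h
    exact h
  refine ⟨?_, ?_, ?_, ?_⟩
  · intro x y
    rw [hd' x y]
    exact add_nonneg (hpos x y) (hpos y x)
  · intro x y
    rw [hd' x y, hd' y x]; ring
  · intro x y
    rw [hd' x y]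
    constructor
    · intro h
      have h1 := hpos x y
      have h2 := hpos y x
      have : M (repl x y) = 0 := by linarith
      exact (hsep x y).mp this
    · rintro rfl
      rw [(hsep x x).mpr rfl]; ring
  · intro x y z
    rw [hd' x y, hd' x z, hd' z y]
    have h1 := htri x y z
    have h2 := htri y x z
    linarith
end

section
/- Let n ≥ 2 and let d be a metric on a set X. Define M : X^n → ℝ by M(x_1,…,x_n) = Σ_{t=2}^{n} Σ_{i=1}^{t−1} d(x_i, x_t) (the sum of d over all pairs i < t). Then M is an n-Metric on X. -/
/-- `d` is a metric on `X`. -/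
def IsMetric {X : Type*} (d : X → X → ℝ) : Prop :=
  (∀ x y, 0 ≤ d x y) ∧
  (∀ x y, d x y = d y x) ∧
  (∀ x y, d x y = 0 ↔ x = y) ∧
  (∀ x y z, d x y ≤ d x z + d z y)

/-- A metric induces an n-𝔐etric via the sum of the distances over all pairs `i < t`. -/
theorem metric_induces_nMetric {X : Type*} {n : ℕ} (hn : 2 ≤ n)
    (d : X → X → ℝ) (hd : IsMetric d)
    (M : (Fin n → X) → ℝ)
    (hM : ∀ x : Fin n → X,
      M x = ∑ t : Fin n, ∑ i ∈ Finset.univ.filter (fun i : Fin n => i.val < t.val),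
        d (x i) (x t)) :
    IsNMetric hn M := by
  obtain ⟨hpos, hsym, hsep, htri⟩ := hd
  have hdd : ∀ x, d x x = 0 := fun x => (hsep x x).mpr rfl
  refine ⟨?_, ?_, ?_, ?_⟩
  · -- nonnegativity
    intro x₁ x₂
    rw [hM]
    exact Finset.sum_nonneg fun t _ => Finset.sum_nonneg fun i _ => hpos _ _
  · -- symmetry
    intro x σ
    have hM2 : ∀ y : Fin n → X, M y =
        ∑ i : Fin n, ∑ t : Fin n, if i.val < t.val then d (y i) (y t) else 0 := by
      intro y
      rw [hM]
      simp only [Finset.sum_filter]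
      exact Finset.sum_comm
    have key : ∀ y : Fin n → X,
        2 * M y = ∑ i : Fin n, ∑ t : Fin n, d (y i) (y t) := by
      intro y
      have tri : ∀ i t : Fin n, d (y i) (y t) =
          (if i.val < t.val then d (y i) (y t) else 0) +
          ((if i.val = t.val then d (y i) (y t) else 0) +
           (if t.val < i.val then d (y i) (y t) else 0)) := by
        intro i t
        rcases lt_trichotomy i.val t.val with h | h | h
        · rw [if_pos h, if_neg (by omega), if_neg (by omega)]; ring
        · rw [if_neg (by omega), if_pos h, if_neg (by omega)]; ring
        · rw [if_neg (by omega), if_neg (by omega), if_pos h]; ring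
      have hB : (∑ i : Fin n, ∑ t : Fin n,
          if i.val = t.val then d (y i) (y t) else 0) = 0 := by
        apply Finset.sum_eq_zero; intro i _
        apply Finset.sum_eq_zero; intro t _
        split_ifs with h
        · have hit : i = t := Fin.ext h
          subst hit; exact hdd _
        · rfl
      have hC : (∑ i : Fin n, ∑ t : Fin n,
          if t.val < i.val then d (y i) (y t) else 0) =
          ∑ i : Fin n, ∑ t : Fin n, if i.val < t.val then d (y i) (y t) else 0 := by
        rw [Finset.sum_comm]
        refine Finset.sum_congr rfl fun a _ => Finset.sum_congr rfl fun b _ => ?_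
        split_ifs with h
        · exact hsym _ _
        · rfl
      symm
      calc ∑ i : Fin n, ∑ t : Fin n, d (y i) (y t)
          = ∑ i : Fin n, ∑ t : Fin n,
            ((if i.val < t.val then d (y i) (y t) else 0) +
             ((if i.val = t.val then d (y i) (y t) else 0) +
              (if t.val < i.val then d (y i) (y t) else 0))) :=
            Finset.sum_congr rfl fun i _ => Finset.sum_congr rfl fun t _ => tri i t
        _ = (∑ i : Fin n, ∑ t : Fin n, if i.val < t.val then d (y i) (y t) else 0) +
            ((∑ i : Fin n, ∑ t : Fin n, if i.val = t.val then d (y i) (y t) else 0) +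
             (∑ i : Fin n, ∑ t : Fin n, if t.val < i.val then d (y i) (y t) else 0)) := by
            simp only [Finset.sum_add_distrib]
        _ = 2 * M y := by rw [hB, hC, ← hM2]; ring
    have h1 := key (x ∘ σ)
    have h2 := key x
    have h3 : (∑ i : Fin n, ∑ t : Fin n, d ((x ∘ σ) i) ((x ∘ σ) t)) =
        ∑ i : Fin n, ∑ t : Fin n, d (x i) (x t) := by
      calc (∑ i : Fin n, ∑ t : Fin n, d (x (σ i)) (x (σ t)))
          = ∑ i : Fin n, ∑ t : Fin n, d (x (σ i)) (x t) :=
            Finset.sum_congr rfl fun i _ => Equiv.sum_comp σ (fun t => d (x (σ i)) (x t))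
        _ = ∑ i : Fin n, ∑ t : Fin n, d (x i) (x t) :=
            Equiv.sum_comp σ (fun i => ∑ t : Fin n, d (x i) (x t))
    rw [h3] at h1
    linarith
  · -- separation
    intro x₁ x₂
    constructor
    · intro h0
      rw [hM] at h0
      have hnn : ∀ t ∈ (Finset.univ : Finset (Fin n)),
          0 ≤ ∑ i ∈ Finset.univ.filter (fun i : Fin n => i.val < t.val),
            d (repl x₁ x₂ i) (repl x₁ x₂ t) :=
        fun t _ => Finset.sum_nonneg fun i _ => hpos _ _
      have h1 := (Finset.sum_eq_zero_iff_of_nonneg hnn).mp h0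
        ⟨n - 1, by omega⟩ (Finset.mem_univ _)
      have h2 := (Finset.sum_eq_zero_iff_of_nonneg (fun i _ => hpos _ _)).mp h1
        ⟨0, by omega⟩ (by
          simp only [Finset.mem_filter, Finset.mem_univ, true_and]
          show 0 < n - 1
          omega)
      have e1 : repl x₁ x₂ (⟨0, by omega⟩ : Fin n) = x₁ := by
        simp only [repl]
        rw [if_neg]
        show ¬ (0 = n - 1)
        omega
      have e2 : repl x₁ x₂ (⟨n - 1, by omega⟩ : Fin n) = x₂ := by
        simp [repl]
      rw [e1, e2] at h2
      exact (hsep _ _).mp h2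
    · intro h
      subst h
      rw [hM]
      apply Finset.sum_eq_zero; intro t _
      apply Finset.sum_eq_zero; intro i _
      have hc : ∀ j : Fin n, repl x₁ x₁ j = x₁ := fun j => by
        simp only [repl]; split <;> rfl
      rw [hc, hc]
      exact hdd _
  · -- triangle inequality
    intro x a
    rw [hM, hM, hM, ← Finset.sum_add_distrib]
    apply Finset.sum_le_sum
    intro t _
    rw [← Finset.sum_add_distrib]
    apply Finset.sum_le_sum
    intro i hi
    have hit : i.val < t.val := (Finset.mem_filter.mp hi).2
    have htn : t.val < n := t.isLt
    have hiv : ¬ (i.val = n - 1) := by omega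
    have hiL : ¬ (i = (⟨n - 1, by omega⟩ : Fin n)) := by
      simp only [Fin.ext_iff]; exact hiv
    simp only [Function.update_apply, repl]
    rw [if_neg hiL, if_neg hiv]
    by_cases ht : t.val = n - 1
    · have htL : t = (⟨n - 1, by omega⟩ : Fin n) := Fin.ext ht
      rw [if_pos htL, if_pos ht, htL]
      exact htri _ _ _
    · have htL : ¬ (t = (⟨n - 1, by omega⟩ : Fin n)) := by
        simp only [Fin.ext_iff]; exact ht
      rw [if_neg htL, if_neg ht, hdd]
      simp
end

section
/- Let s be a strong partial metric on a set X. Consider the topology on X generated by the collection of all balls B_ε(x) = { y ∈ X : s(x,y) − s(x,x) < ε } for x ∈ X and real ε > 0. Then this topology is T1: for any two distinct points x, y ∈ X there exist open sets U and V with x ∈ U, y ∉ U, y ∈ V, x ∉ V. -/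
/-- `s` is a strong partial metric on `X`. -/
def IsStrongPartialMetric {X : Type*} (s : X → X → ℝ) : Prop :=
  (∀ x y, x ≠ y → s x x < s x y) ∧
  (∀ x y, s x y = s y x) ∧
  (∀ x y z, s x y ≤ s x z + s z y - s z z)

/-- The topology generated by the open balls of a strong partial metric is T1. -/
theorem strongPartialMetric_topology_t1 {X : Type*} (s : X → X → ℝ)
    (hs : IsStrongPartialMetric s)
    (T : TopologicalSpace X)
    (hT : T = TopologicalSpace.generateFrom
      {B : Set X | ∃ (a : X) (ε : ℝ), 0 < ε ∧ B = {z : X | s a z - s a a < ε}}) :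
    ∀ x y : X, x ≠ y →
      ∃ U V : Set X, T.IsOpen U ∧ T.IsOpen V ∧
        x ∈ U ∧ y ∉ U ∧ y ∈ V ∧ x ∉ V := by
  intro x y hxy
  obtain ⟨hlb, _, _⟩ := hs
  have hx : s x x < s x y := hlb x y hxy
  have hy : s y y < s y x := hlb y x hxy.symm
  refine ⟨{z | s x z - s x x < s x y - s x x}, {z | s y z - s y y < s y x - s y y},
    ?_, ?_, ?_, ?_, ?_, ?_⟩
  · rw [hT]
    exact TopologicalSpace.GenerateOpen.basic _ ⟨x, _, by linarith, rfl⟩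
  · rw [hT]
    exact TopologicalSpace.GenerateOpen.basic _ ⟨y, _, by linarith, rfl⟩
  · simp only [Set.mem_setOf_eq]; linarith
  · simp only [Set.mem_setOf_eq]; linarith
  · simp only [Set.mem_setOf_eq]; linarith
  · simp only [Set.mem_setOf_eq]; linarith
end

section
/- Let p be a partial metric on a set X and let (x_i)_{i∈ℕ} be a Cauchy sequence in (X,p) with central distance r. If a and b are both special limits of (x_i), then a = b. -/
/-- `p` is a partial metric on `X`. -/
def IsPartialMetric {X : Type*} (p : X → X → ℝ) : Prop :=
  (∀ x y, p x x ≤ p x y) ∧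
  (∀ x y, p x y = p y x) ∧
  (∀ x y, (p x x = p x y ∧ p x y = p y y) ↔ x = y) ∧
  (∀ x y z, p x y ≤ p x z + p z y - p z z)

/-- The sequence `x` is Cauchy in `(X,p)` with central distance `r`. -/
def IsCauchyWith {X : Type*} (p : X → X → ℝ) (x : ℕ → X) (r : ℝ) : Prop :=
  ∀ ε : ℝ, 0 < ε → ∃ N : ℕ, ∀ i j : ℕ, N < j → j ≤ i → |p (x i) (x j) - r| < ε

/-- `a` is a limit of the sequence `x` in `(X,p)`. -/
def IsLimit {X : Type*} (p : X → X → ℝ) (x : ℕ → X) (a : X) : Prop :=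
  ∀ ε : ℝ, 0 < ε → ∃ N : ℕ, ∀ i : ℕ, N < i → p a (x i) - p a a < ε

/-- `a` is a special limit of a Cauchy sequence `x` with central distance `r`. -/
def IsSpecialLimit {X : Type*} (p : X → X → ℝ) (x : ℕ → X) (r : ℝ) (a : X) : Prop :=
  IsLimit p x a ∧ p a a = r

/-- The special limit of a Cauchy sequence in a partial metric space is unique. -/
theorem specialLimit_unique {X : Type*} (p : X → X → ℝ) (hp : IsPartialMetric p)
    (x : ℕ → X) (r : ℝ) (hx : IsCauchyWith p x r)
    (a b : X) (ha : IsSpecialLimit p x r a) (hb : IsSpecialLimit p x r b) :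
    a = b := by
  obtain ⟨hlb, hsym, hsep, htri⟩ := hp
  obtain ⟨ha1, ha2⟩ := ha
  obtain ⟨hb1, hb2⟩ := hb
  have key : p a b = r := by
    have hle : p a b ≤ r := by
      by_contra h
      push_neg at h
      set ε := (p a b - r) / 3 with hε
      have hεpos : 0 < ε := by rw [hε]; linarith
      obtain ⟨N1, h1⟩ := ha1 ε hεpos
      obtain ⟨N2, h2⟩ := hb1 ε hεpos
      obtain ⟨N3, h3⟩ := hx ε hεpos
      set i := max N1 (max N2 N3) + 1 with hi
      have hi1 : N1 < i := by omega
      have hi2 : N2 < i := by omega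
      have hi3 : N3 < i := by omega
      have c1 := h1 i hi1
      have c2 := h2 i hi2
      have c3 := h3 i i hi3 le_rfl
      have c4 := htri a b (x i)
      rw [abs_lt] at c3
      have : p (x i) b = p b (x i) := hsym _ _
      rw [ha2, hb2] at *
      linarith [c3.1, c3.2]
    have hge : r ≤ p a b := by
      have := hlb a b; linarith
    linarith
  exact (hsep a b).mp ⟨by rw [ha2, key], by rw [hb2, key]⟩
end

section
/- Let p be a partial metric on a set X and let a be the special limit of a Cauchy sequence (x_i)_{i∈ℕ} in (X,p) with central distance r. Then for every y ∈ X and every ε > 0 there exists N ∈ ℕ such that for all i > N, |p(y,x_i) − p(y,a)| < ε; that is, p(y,x_i) → p(y,a) as i → ∞. -/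
/-- If `a` is the special limit of a Cauchy sequence `x`, then `p(y, x_i) → p(y, a)`
for every `y`. -/
theorem specialLimit_continuity {X : Type*} (p : X → X → ℝ) (hp : IsPartialMetric p)
    (x : ℕ → X) (r : ℝ) (hx : IsCauchyWith p x r)
    (a : X) (ha : IsSpecialLimit p x r a) :
    ∀ y : X, ∀ ε : ℝ, 0 < ε → ∃ N : ℕ, ∀ i : ℕ, N < i →
      |p y (x i) - p y a| < ε := by
  obtain ⟨hlb, hsym, _, htri⟩ := hp
  obtain ⟨hlim, har⟩ := ha
  intro y ε hε
  obtain ⟨N₁, hN₁⟩ := hlim (ε / 2) (by linarith)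
  obtain ⟨N₂, hN₂⟩ := hx (ε / 2) (by linarith)
  refine ⟨max N₁ N₂, fun i hi => ?_⟩
  have hi1 : N₁ < i := lt_of_le_of_lt (le_max_left _ _) hi
  have hi2 : N₂ < i := lt_of_le_of_lt (le_max_right _ _) hi
  have h1 := hN₁ i hi1
  have h2 := hN₂ i i hi2 le_rfl
  have hd : |p (x i) (x i) - r| < ε / 2 := h2
  have hub : p y (x i) ≤ p y a + p a (x i) - p a a := htri y (x i) a
  have hlb' : p y a ≤ p y (x i) + p (x i) a - p (x i) (x i) := htri y a (x i)
  have hsya : p (x i) a = p a (x i) := hsym _ _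
  rw [abs_lt]
  rw [abs_lt] at hd
  constructor <;> [skip; linarith]
  have : p y a - p y (x i) ≤ p (x i) a - p (x i) (x i) := by linarith
  rw [hsya] at this
  linarith [har ▸ hd.2, hN₁ i hi1]
end

section
/- Let p be a partial metric on a set X and let (x_i)_{i∈ℕ} and (y_i)_{i∈ℕ} be sequences forming a Cauchy pair in (X,p) with central distance r. Then both (x_i) and (y_i) are Cauchy sequences with central distance r; moreover, if a is a limit of (x_i) then a is a limit of (y_i), and if a is a special limit of (x_i) then a is a special limit of (y_i). -/
/-- The sequences `x` and `y` form a Cauchy pair in `(X,p)` with central distance `r`. -/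
def IsCauchyPair {X : Type*} (p : X → X → ℝ) (x y : ℕ → X) (r : ℝ) : Prop :=
  ∀ ε : ℝ, 0 < ε → ∃ N : ℕ, ∀ i j : ℕ, N < i → N < j →
    r - ε < min (p (x i) (x i)) (p (y j) (y j)) ∧
    min (p (x i) (x i)) (p (y j) (y j)) ≤ p (x i) (y j) ∧
    p (x i) (y j) < r + ε

/-- A Cauchy pair consists of two Cauchy sequences with the same central distance,
and they share their (special) limits. -/
theorem cauchyPair_properties {X : Type*} (p : X → X → ℝ) (hp : IsPartialMetric p)
    (x y : ℕ → X) (r : ℝ) (hxy : IsCauchyPair p x y r) :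
    IsCauchyWith p x r ∧ IsCauchyWith p y r ∧
    (∀ a : X, IsLimit p x a → IsLimit p y a) ∧
    (∀ a : X, IsSpecialLimit p x r a → IsSpecialLimit p y r a) := by
  obtain ⟨hlb, hsym, hsep, htri⟩ := hp
  have hx : IsCauchyWith p x r := by
    intro ε hε
    obtain ⟨N, hN⟩ := hxy (ε/3) (by linarith)
    refine ⟨N, fun i j hj hij => ?_⟩
    have hi : N < i := lt_of_lt_of_le hj hij
    have hk : N < N + 1 := Nat.lt_succ_self N
    obtain ⟨h1i, h2i, h3i⟩ := hN i (N+1) hi hk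
    obtain ⟨h1j, h2j, h3j⟩ := hN j (N+1) hj hk
    have hxii : r - ε/3 < p (x i) (x i) := lt_of_lt_of_le h1i (min_le_left _ _)
    have hykk : r - ε/3 < p (y (N+1)) (y (N+1)) := lt_of_lt_of_le h1j (min_le_right _ _)
    have hlow : p (x i) (x i) ≤ p (x i) (x j) := hlb _ _
    have htr : p (x i) (x j) ≤ p (x i) (y (N+1)) + p (y (N+1)) (x j) - p (y (N+1)) (y (N+1)) := htri _ _ _
    have hsy : p (y (N+1)) (x j) = p (x j) (y (N+1)) := hsym _ _
    rw [abs_lt]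
    constructor <;> linarith
  have hy : IsCauchyWith p y r := by
    intro ε hε
    obtain ⟨N, hN⟩ := hxy (ε/3) (by linarith)
    refine ⟨N, fun i j hj hij => ?_⟩
    have hi : N < i := lt_of_lt_of_le hj hij
    have hk : N < N + 1 := Nat.lt_succ_self N
    obtain ⟨h1i, h2i, h3i⟩ := hN (N+1) i hk hi
    obtain ⟨h1j, h2j, h3j⟩ := hN (N+1) j hk hj
    have hyii : r - ε/3 < p (y i) (y i) := lt_of_lt_of_le h1i (min_le_right _ _)
    have hxkk : r - ε/3 < p (x (N+1)) (x (N+1)) := lt_of_lt_of_le h1i (min_le_left _ _)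
    have hlow : p (y i) (y i) ≤ p (y i) (y j) := hlb _ _
    have htr : p (y i) (y j) ≤ p (y i) (x (N+1)) + p (x (N+1)) (y j) - p (x (N+1)) (x (N+1)) := htri _ _ _
    have hsy : p (y i) (x (N+1)) = p (x (N+1)) (y i) := hsym _ _
    rw [abs_lt]
    constructor <;> linarith
  have hlim : ∀ a : X, IsLimit p x a → IsLimit p y a := by
    intro a ha ε hε
    obtain ⟨N1, h1⟩ := hxy (ε/3) (by linarith)
    obtain ⟨N2, h2⟩ := ha (ε/3) (by linarith)
    refine ⟨max N1 N2, fun j hj => ?_⟩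
    set i := max N1 N2 + 1 with hidef
    have hiN1 : N1 < i := lt_of_le_of_lt (le_max_left _ _) (Nat.lt_succ_self _)
    have hiN2 : N2 < i := lt_of_le_of_lt (le_max_right _ _) (Nat.lt_succ_self _)
    have hjN1 : N1 < j := lt_of_le_of_lt (le_max_left _ _) hj
    obtain ⟨h1', h2', h3'⟩ := h1 i j hiN1 hjN1
    have hxii : r - ε/3 < p (x i) (x i) := lt_of_lt_of_le h1' (min_le_left _ _)
    have haxi : p a (x i) - p a a < ε/3 := h2 i hiN2
    have htr : p a (y j) ≤ p a (x i) + p (x i) (y j) - p (x i) (x i) := htri _ _ _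
    linarith
  exact ⟨hx, hy, hlim, fun a h => ⟨hlim a h.1, h.2⟩⟩
end

section
/- Let p be a partial metric on a set X, x₀ ∈ X, f : X → X a function, and r ∈ ℝ, 0 < c < 1 real numbers. Suppose that for all natural numbers i: r ≤ p(f^i(x₀), f^i(x₀)) and p(f^{i+2}(x₀), f^{i+1}(x₀)) ≤ r + c^{i+1}·|p(f(x₀), x₀)| (i.e. f is an orbital c_r-contraction at x₀). Then the orbit (f^i(x₀))_{i∈ℕ} is a Cauchy sequence in (X,p) with central distance r. -/
/-- An orbital `c_r`-contraction generates a Cauchy orbit with central distance `r`. -/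
theorem orbital_cr_contraction_cauchy {X : Type*} (p : X → X → ℝ)
    (hp : IsPartialMetric p) (x₀ : X) (f : X → X) (r c : ℝ)
    (hc0 : 0 < c) (hc1 : c < 1)
    (h1 : ∀ i : ℕ, r ≤ p (f^[i] x₀) (f^[i] x₀))
    (h2 : ∀ i : ℕ, p (f^[i + 2] x₀) (f^[i + 1] x₀) ≤ r + c ^ (i + 1) * |p (f x₀) x₀|) :
    IsCauchyWith p (fun i => f^[i] x₀) r := by
  obtain ⟨hlb, hsym, _, htri⟩ := hp
  set M : ℝ := |p (f x₀) x₀| with hMdef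
  have hM : 0 ≤ M := abs_nonneg _
  have h1c : 0 < 1 - c := by linarith
  -- lower bound
  have hlow : ∀ i j : ℕ, r ≤ p (f^[i] x₀) (f^[j] x₀) := by
    intro i j
    calc r ≤ p (f^[j] x₀) (f^[j] x₀) := h1 j
    _ ≤ p (f^[j] x₀) (f^[i] x₀) := hlb _ _
    _ = p (f^[i] x₀) (f^[j] x₀) := hsym _ _
  -- chained upper bound
  have key : ∀ m d : ℕ,
      p (f^[m + 1 + (d + 1)] x₀) (f^[m + 1] x₀)
        ≤ r + (∑ k ∈ Finset.range (d + 1), c ^ (m + 1 + k)) * M := by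
    intro m d
    induction d with
    | zero =>
      have := h2 m
      simpa [pow_succ, mul_comm] using this
    | succ d ih =>
      have tri := htri (f^[m + 1 + (d + 2)] x₀) (f^[m + 1] x₀) (f^[m + 1 + (d + 1)] x₀)
      have hmid := h1 (m + 1 + (d + 1))
      have hs := h2 (m + 1 + d)
      have e1 : m + 1 + (d + 2) = (m + 1 + d) + 2 := by ring
      have e2 : m + 1 + (d + 1) = (m + 1 + d) + 1 := by ring
      rw [e1, e2] at tri
      rw [e2] at hmid
      have esum : (∑ k ∈ Finset.range (d + 2), c ^ (m + 1 + k)) =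
          (∑ k ∈ Finset.range (d + 1), c ^ (m + 1 + k)) + c ^ (m + 1 + (d + 1)) := by
        rw [Finset.sum_range_succ]
      rw [e1, esum]
      rw [e2] at ih
      have hexp : (∑ k ∈ Finset.range (d + 1), c ^ (m + 1 + k) + c ^ (m + 1 + (d + 1))) * M
          = (∑ k ∈ Finset.range (d + 1), c ^ (m + 1 + k)) * M + c ^ (m + 1 + d + 1) * M := by
        rw [show m + 1 + (d + 1) = m + 1 + d + 1 from by omega]; ring
      linarith [ih, hs, tri, hmid]
  -- geometric bound on the sum
  have hsumle : ∀ m d : ℕ,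
      (∑ k ∈ Finset.range (d + 1), c ^ (m + 1 + k)) * M ≤ c ^ (m + 1) * (M / (1 - c)) := by
    intro m d
    have hfac : (∑ k ∈ Finset.range (d + 1), c ^ (m + 1 + k)) =
        c ^ (m + 1) * ∑ k ∈ Finset.range (d + 1), c ^ k := by
      rw [Finset.mul_sum]
      exact Finset.sum_congr rfl fun k _ => by rw [pow_add]
    have hgeo : (∑ k ∈ Finset.range (d + 1), c ^ k) ≤ 1 / (1 - c) := by
      rw [geom_sum_eq (ne_of_lt hc1)]
      have heq : (c ^ (d + 1) - 1) / (c - 1) = (1 - c ^ (d + 1)) / (1 - c) := by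
        rw [div_eq_div_iff (by linarith) (by linarith)]; ring
      rw [heq]
      gcongr
      have : (0:ℝ) ≤ c ^ (d + 1) := by positivity
      linarith
    rw [hfac]
    have hcp : (0:ℝ) ≤ c ^ (m + 1) := by positivity
    calc c ^ (m + 1) * (∑ k ∈ Finset.range (d + 1), c ^ k) * M
        ≤ c ^ (m + 1) * (1 / (1 - c)) * M := by
          apply mul_le_mul_of_nonneg_right _ hM
          exact mul_le_mul_of_nonneg_left hgeo hcp
      _ = c ^ (m + 1) * (M / (1 - c)) := by ring
  -- full upper bound, for j ≥ 1, j ≤ i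
  have upper : ∀ i j : ℕ, 1 ≤ j → j ≤ i →
      p (f^[i] x₀) (f^[j] x₀) ≤ r + c ^ j * (M / (1 - c)) := by
    intro i j hj hji
    obtain ⟨m, rfl⟩ := Nat.exists_eq_add_of_le hj
    rcases Nat.lt_or_ge (1 + m) i with hlt | hge
    · obtain ⟨d, rfl⟩ := Nat.exists_eq_add_of_lt hlt
      have := key m d
      have e' : 1 + m + d + 1 = m + 1 + (d + 1) := by omega
      have e : 1 + m = m + 1 := by omega
      rw [e', e]
      exact this.trans (by linarith [hsumle m d])
    · have hij : i = 1 + m := le_antisymm hge hji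
      subst hij
      have e : 1 + m = m + 1 := by ring
      rw [e]
      have hself : p (f^[m+1] x₀) (f^[m+1] x₀) ≤ p (f^[m+1+1] x₀) (f^[m+1] x₀) := by
        calc p (f^[m+1] x₀) (f^[m+1] x₀) ≤ p (f^[m+1] x₀) (f^[m+1+1] x₀) := hlb _ _
        _ = p (f^[m+1+1] x₀) (f^[m+1] x₀) := hsym _ _
      have := key m 0
      have hb := hsumle m 0
      linarith
  -- conclude
  intro ε hε
  obtain ⟨n, hn⟩ := exists_pow_lt_of_lt_one (x := ε / (M / (1 - c) + 1))
    (by positivity) hc1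
  refine ⟨n + 1, fun i j hj hji => ?_⟩
  have hj1 : 1 ≤ j := by omega
  have hub := upper i j hj1 hji
  have hlb' := hlow i j
  rw [abs_sub_lt_iff]
  constructor
  · have hcj : c ^ j ≤ c ^ n := by
      exact pow_le_pow_of_le_one (le_of_lt hc0) (le_of_lt hc1) (by omega)
    have hMd : 0 ≤ M / (1 - c) := by positivity
    have : c ^ j * (M / (1 - c)) ≤ c ^ n * (M / (1 - c) + 1) := by
      have h0 : c ^ j * (M / (1 - c)) ≤ c ^ n * (M / (1 - c)) :=
        mul_le_mul_of_nonneg_right hcj hMd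
      nlinarith [pow_pos hc0 n]
    have h2' : c ^ n * (M / (1 - c) + 1) < ε :=
      (lt_div_iff₀ (by positivity : (0:ℝ) < M / (1 - c) + 1)).mp hn
    simp only at hub hlb' ⊢
    linarith
  · simp only at hlb' ⊢
    linarith
end

section
/- Let p be a partial metric on a set X, x₀ ∈ X, f : X → X a function, r ∈ ℝ, and φ : [r,∞) → [0,∞) a non-decreasing function with φ(t) = 0 if and only if t = r. Suppose that for all natural numbers i and j: r ≤ p(f^i(x₀), f^i(x₀)) and p(f^{i+1}(x₀), f^{j+1}(x₀)) ≤ p(f^i(x₀), f^j(x₀)) − φ(p(f^i(x₀), f^j(x₀))) (i.e. f is an orbital φ_r-contraction at x₀). Then the orbit (f^i(x₀))_{i∈ℕ} is a Cauchy sequence in (X,p) with central distance r. -/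
open Filter Set Topology

namespace IsPartialMetric

variable {X : Type*} {p : X → X → ℝ}

theorem self_le (hp : IsPartialMetric p) (x y : X) : p x x ≤ p x y := hp.1 x y

theorem comm (hp : IsPartialMetric p) (x y : X) : p x y = p y x := hp.2.1 x y

theorem le_add_sub (hp : IsPartialMetric p) (x y z : X) : p x y ≤ p x z + p z y - p z z :=
  hp.2.2.2 x y z

end IsPartialMetric

theorem exists_lt_of_forall_le_imp_succ_le_sub {a : ℕ → ℝ} {b c u : ℝ} (hc : 0 < c)
    (hb : ∀ n, b ≤ a n) (hstep : ∀ n, u ≤ a n → a (n + 1) ≤ a n - c) : ∃ n, a n < u := by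
  by_contra! hu
  have hlin : ∀ n : ℕ, a n ≤ a 0 - n * c := by
    intro n
    induction n with
    | zero => simp
    | succ n ih => push_cast; linarith [hstep n (hu n)]
  obtain ⟨n, hn⟩ := exists_nat_gt ((a 0 - b) / c)
  rw [div_lt_iff₀ hc] at hn
  linarith [hlin n, hb n]

section Contraction

variable {φ : ℝ → ℝ} {r : ℝ}

theorem nonneg_of_monotoneOn_Ici (hφ : MonotoneOn φ (Ici r)) (hφr : φ r = 0) {t : ℝ}
    (ht : r ≤ t) : 0 ≤ φ t :=
  hφr ▸ hφ self_mem_Ici ht ht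

theorem tendsto_of_forall_succ_le_sub {a : ℕ → ℝ} (hφ : MonotoneOn φ (Ici r)) (hφr : φ r = 0)
    (hφpos : ∀ t, r < t → 0 < φ t) (hr : ∀ n, r ≤ a n)
    (hstep : ∀ n, a (n + 1) ≤ a n - φ (a n)) : Tendsto a atTop (𝓝 r) := by
  have hanti : Antitone a := antitone_nat_of_succ_le fun n ↦ by
    linarith [hstep n, nonneg_of_monotoneOn_Ici hφ hφr (hr n)]
  refine tendsto_order.2 ⟨fun l hl ↦ Eventually.of_forall fun n ↦ hl.trans_le (hr n), fun u hu ↦ ?_⟩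
  obtain ⟨N, hN⟩ : ∃ N, a N < u :=
    exists_lt_of_forall_le_imp_succ_le_sub (hφpos u hu) hr fun n hn ↦
      (hstep n).trans (by linarith [hφ hu.le (hu.le.trans hn) hn])
  exact eventually_atTop.2 ⟨N, fun n hn ↦ (hanti hn).trans_lt hN⟩

variable {X : Type*} {p : X → X → ℝ} {x : ℕ → X}

theorem le_of_le_diag (hp : IsPartialMetric p) (hdiag : ∀ i, r ≤ p (x i) (x i)) (i j : ℕ) :
    r ≤ p (x i) (x j) :=
  (hdiag i).trans (hp.self_le _ _)

theorem lt_of_adjacent_lt (hp : IsPartialMetric p) (hφ : MonotoneOn φ (Ici r)) (hφr : φ r = 0)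
    (hdiag : ∀ i, r ≤ p (x i) (x i))
    (hcontr : ∀ i j, p (x (i + 1)) (x (j + 1)) ≤ p (x i) (x j) - φ (p (x i) (x j)))
    {ε δ : ℝ} (hδε : δ ≤ ε / 2) (hδφ : δ ≤ φ (r + ε / 2)) {j : ℕ}
    (hj : p (x (j + 1)) (x j) < r + δ) (k : ℕ) : p (x (j + k)) (x j) < r + ε := by
  induction k with
  | zero =>
    rw [add_zero]
    linarith [hp.self_le (x j) (x (j + 1)), hp.comm (x j) (x (j + 1)), le_of_le_diag hp hdiag (j + 1) j]
  | succ k ih =>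
    set d := p (x (j + k)) (x j)
    have hstep : p (x (j + (k + 1))) (x j) ≤ d - φ d + δ := by
      have htri := hp.le_add_sub (x (j + (k + 1))) (x j) (x (j + 1))
      have hc : p (x (j + (k + 1))) (x (j + 1)) ≤ d - φ d := hcontr (j + k) j
      linarith [hdiag (j + 1)]
    rcases lt_or_ge d (r + ε / 2) with hd | hd
    · linarith [nonneg_of_monotoneOn_Ici hφ hφr (le_of_le_diag hp hdiag (j + k) j)]
    · linarith [hφ (mem_Ici.2 (by linarith)) (mem_Ici.2 (by linarith)) hd]

theorem isCauchyWith_of_contraction (hp : IsPartialMetric p) (hφ : MonotoneOn φ (Ici r))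
    (hφr : φ r = 0) (hφpos : ∀ t, r < t → 0 < φ t) (hdiag : ∀ i, r ≤ p (x i) (x i))
    (hcontr : ∀ i j, p (x (i + 1)) (x (j + 1)) ≤ p (x i) (x j) - φ (p (x i) (x j))) :
    IsCauchyWith p x r := by
  intro ε hε
  set δ := min (ε / 2) (φ (r + ε / 2))
  have hδ : 0 < δ := lt_min (by linarith) (hφpos _ (by linarith))
  have hadj : Tendsto (fun n ↦ p (x (n + 1)) (x n)) atTop (𝓝 r) :=
    tendsto_of_forall_succ_le_sub hφ hφr hφpos (fun n ↦ le_of_le_diag hp hdiag _ _)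
      fun n ↦ hcontr (n + 1) n
  obtain ⟨N, hN⟩ := eventually_atTop.1 ((tendsto_order.1 hadj).2 (r + δ) (by linarith))
  refine ⟨N, fun i j hj hji ↦ ?_⟩
  obtain ⟨k, rfl⟩ := Nat.exists_eq_add_of_le hji
  have hupper := lt_of_adjacent_lt hp hφ hφr hdiag hcontr (min_le_left _ _) (min_le_right _ _)
    (hN j hj.le) k
  rw [abs_sub_lt_iff]
  constructor <;> linarith [le_of_le_diag hp hdiag (j + k) j]

end Contraction

theorem orbital_phir_contraction_cauchy_general {X : Type*} (p : X → X → ℝ)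
    (hp : IsPartialMetric p) (x₀ : X) (f : X → X) (r : ℝ) (φ : ℝ → ℝ)
    (hφmono : ∀ s t : ℝ, r ≤ s → s ≤ t → φ s ≤ φ t)
    (hφzero : ∀ t : ℝ, r ≤ t → (φ t = 0 ↔ t = r))
    (h1 : ∀ i : ℕ, r ≤ p (f^[i] x₀) (f^[i] x₀))
    (h2 : ∀ i j : ℕ, p (f^[i + 1] x₀) (f^[j + 1] x₀) ≤
      p (f^[i] x₀) (f^[j] x₀) - φ (p (f^[i] x₀) (f^[j] x₀))) :
    IsCauchyWith p (fun i => f^[i] x₀) r := by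
  have hφ : MonotoneOn φ (Ici r) := fun s hs t _ hst ↦ hφmono s t hs hst
  have hφr : φ r = 0 := (hφzero r le_rfl).2 rfl
  have hφpos : ∀ t, r < t → 0 < φ t := fun t ht ↦
    (nonneg_of_monotoneOn_Ici hφ hφr ht.le).lt_of_ne fun h ↦
      ht.ne' ((hφzero t ht.le).1 h.symm)
  exact isCauchyWith_of_contraction hp hφ hφr hφpos h1 h2

/-- An orbital `φ_r`-contraction generates a Cauchy orbit with central distance `r`. -/
theorem orbital_phir_contraction_cauchy {X : Type*} (p : X → X → ℝ)
    (hp : IsPartialMetric p) (x₀ : X) (f : X → X) (r : ℝ) (φ : ℝ → ℝ)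
    (hφ0 : ∀ t : ℝ, r ≤ t → 0 ≤ φ t)
    (hφmono : ∀ s t : ℝ, r ≤ s → s ≤ t → φ s ≤ φ t)
    (hφzero : ∀ t : ℝ, r ≤ t → (φ t = 0 ↔ t = r))
    (h1 : ∀ i : ℕ, r ≤ p (f^[i] x₀) (f^[i] x₀))
    (h2 : ∀ i j : ℕ, p (f^[i + 1] x₀) (f^[j + 1] x₀) ≤
      p (f^[i] x₀) (f^[j] x₀) - φ (p (f^[i] x₀) (f^[j] x₀))) :
    IsCauchyWith p (fun i => f^[i] x₀) r :=
  orbital_phir_contraction_cauchy_general p hp x₀ f r φ hφmono hφzero h1 h2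
end

section
/- Let p be a partial metric on a set X, x₀, y₀ ∈ X, f, g : X → X functions, r ∈ ℝ and 0 < c < 1. Let M = max{|p(f(x₀), y₀)|, |p(x₀, y₀)|}. Suppose that for all natural numbers i: r ≤ min{p(f^i(x₀), f^i(x₀)), p(g^i(y₀), g^i(y₀))}, p(f^{i+1}(x₀), g^i(y₀)) ≤ r + c^i·M, and p(f^i(x₀), g^i(y₀)) ≤ r + c^i·M (i.e. f and g are f-pairwise c_r-contractive over (x₀,y₀)). Then the sequences (f^i(x₀))_{i∈ℕ} and (g^i(y₀))_{i∈ℕ} form a Cauchy pair in (X,p) with central distance r. -/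
/-- `f`-pairwise `c_r`-contractive functions generate a Cauchy pair of orbits. -/
theorem pairwise_cr_contractive_cauchyPair {X : Type*} (p : X → X → ℝ)
    (hp : IsPartialMetric p) (x₀ y₀ : X) (f g : X → X) (r c M : ℝ)
    (hc0 : 0 < c) (hc1 : c < 1)
    (hM : M = max |p (f x₀) y₀| |p x₀ y₀|)
    (h1 : ∀ i : ℕ, r ≤ min (p (f^[i] x₀) (f^[i] x₀)) (p (g^[i] y₀) (g^[i] y₀)))
    (h2 : ∀ i : ℕ, p (f^[i + 1] x₀) (g^[i] y₀) ≤ r + c ^ i * M)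
    (h3 : ∀ i : ℕ, p (f^[i] x₀) (g^[i] y₀) ≤ r + c ^ i * M) :
    IsCauchyPair p (fun i => f^[i] x₀) (fun i => g^[i] y₀) r := by
  obtain ⟨hlb, hsym, hsep, htri⟩ := hp
  have hM0 : 0 ≤ M := hM ▸ le_trans (abs_nonneg _) (le_max_left _ _)
  have hc1' : 0 < 1 - c := by linarith
  have hxself : ∀ i, r ≤ p (f^[i] x₀) (f^[i] x₀) := fun i => (h1 i).trans (min_le_left _ _)
  have hyself : ∀ i, r ≤ p (g^[i] y₀) (g^[i] y₀) := fun i => (h1 i).trans (min_le_right _ _)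
  -- step bounds
  have hxx : ∀ k, p (f^[k + 1] x₀) (f^[k] x₀) ≤ r + 2 * (c ^ k * M) := by
    intro k
    have t := htri (f^[k + 1] x₀) (f^[k] x₀) (g^[k] y₀)
    have h2k := h2 k
    have h3k := h3 k
    have hs := hsym (g^[k] y₀) (f^[k] x₀)
    have hy := hyself k
    linarith
  have hyy : ∀ k, p (g^[k + 1] y₀) (g^[k] y₀) ≤ r + 2 * (c ^ k * M) := by
    intro k
    have t := htri (g^[k + 1] y₀) (g^[k] y₀) (f^[k + 1] x₀)
    have h2k := h2 k
    have h3k := h3 (k + 1)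
    have hs1 := hsym (g^[k + 1] y₀) (f^[k + 1] x₀)
    have hs2 := hsym (f^[k + 1] x₀) (g^[k] y₀)
    have hx := hxself (k + 1)
    have hpow : c ^ (k + 1) ≤ c ^ k := pow_le_pow_of_le_one hc0.le hc1.le (Nat.le_succ k)
    nlinarith [hpow, hM0]
  -- telescoped bounds
  have A : ∀ m n, p (f^[m + n] x₀) (g^[m] y₀) ≤
      r + c ^ m * M + 2 * M * (c ^ m * (1 - c ^ n) / (1 - c)) := by
    intro m n
    induction n with
    | zero => simpa using h3 m
    | succ n ih =>
      have t := htri (f^[m + n + 1] x₀) (g^[m] y₀) (f^[m + n] x₀)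
      have hstep := hxx (m + n)
      have hself := hxself (m + n)
      have key : 2 * M * (c ^ m * (1 - c ^ (n + 1)) / (1 - c)) =
          2 * M * (c ^ m * (1 - c ^ n) / (1 - c)) + 2 * (c ^ (m + n) * M) := by
        rw [pow_add, pow_succ]
        field_simp
        ring
      have hgoal : m + (n + 1) = m + n + 1 := rfl
      rw [hgoal, key]
      linarith
  have B : ∀ m n, p (f^[m] x₀) (g^[m + n] y₀) ≤
      r + c ^ m * M + 2 * M * (c ^ m * (1 - c ^ n) / (1 - c)) := by
    intro m n
    induction n with
    | zero => simpa using h3 m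
    | succ n ih =>
      have t := htri (f^[m] x₀) (g^[m + n + 1] y₀) (g^[m + n] y₀)
      have hstep := hyy (m + n)
      have hself := hyself (m + n)
      have hs := hsym (g^[m + n] y₀) (g^[m + n + 1] y₀)
      have key : 2 * M * (c ^ m * (1 - c ^ (n + 1)) / (1 - c)) =
          2 * M * (c ^ m * (1 - c ^ n) / (1 - c)) + 2 * (c ^ (m + n) * M) := by
        rw [pow_add, pow_succ]
        field_simp
        ring
      have hgoal : m + (n + 1) = m + n + 1 := rfl
      rw [hgoal, key]
      linarith
  -- uniform bound with K
  set K : ℝ := M * (1 + 2 / (1 - c)) with hK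
  have hK0 : 0 ≤ K := by positivity
  have C : ∀ i j : ℕ, p (f^[i] x₀) (g^[j] y₀) ≤ r + c ^ min i j * K := by
    intro i j
    have hfrac : ∀ m n : ℕ, r + c ^ m * M + 2 * M * (c ^ m * (1 - c ^ n) / (1 - c)) ≤
        r + c ^ m * K := by
      intro m n
      have hcm : (0:ℝ) ≤ c ^ m := by positivity
      have hcn : (0:ℝ) ≤ c ^ n := by positivity
      have : c ^ m * (1 - c ^ n) / (1 - c) ≤ c ^ m / (1 - c) := by
        rw [div_le_div_iff₀ hc1' hc1']
        nlinarith [mul_nonneg (mul_nonneg hcm hcn) hc1'.le]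
      have h2' : 2 * M * (c ^ m * (1 - c ^ n) / (1 - c)) ≤ 2 * M * (c ^ m / (1 - c)) := by
        nlinarith
      rw [hK]
      have : c ^ m * (M * (1 + 2 / (1 - c))) = c ^ m * M + 2 * M * (c ^ m / (1 - c)) := by
        ring
      rw [this]
      linarith
    rcases le_total i j with h | h
    · have := (B i (j - i)).trans (hfrac i (j - i))
      rw [Nat.add_sub_cancel' h] at this
      rwa [min_eq_left h]
    · have := (A j (i - j)).trans (hfrac j (i - j))
      rw [Nat.add_sub_cancel' h] at this
      rwa [min_eq_right h]
  intro ε hε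
  have htend : Filter.Tendsto (fun n : ℕ => c ^ n * K) Filter.atTop (nhds 0) := by
    have := tendsto_pow_atTop_nhds_zero_of_lt_one hc0.le hc1
    simpa using this.mul_const K
  have hev : ∀ᶠ n in Filter.atTop, c ^ n * K < ε := by
    filter_upwards [htend.eventually_lt_const hε] with n hn using hn
  obtain ⟨N, hN⟩ := hev.exists_forall_of_atTop
  refine ⟨N, fun i j hi hj => ?_⟩
  simp only
  refine ⟨?_, ?_, ?_⟩
  · have := le_min (hxself i) (hyself j)
    linarith [this]
  · exact le_trans (min_le_left _ _) (hlb _ _)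
  · have hmin : N ≤ min i j := le_min hi.le hj.le
    have hpow : c ^ min i j ≤ c ^ N := pow_le_pow_of_le_one hc0.le hc1.le hmin
    have : c ^ min i j * K ≤ c ^ N * K := by nlinarith
    have hNε := hN N le_rfl
    have := C i j
    linarith
end

section
/- Let p be a partial metric on a set X, x₀ ∈ X, and f : X → X a non-expansive function, i.e. p(f(x), f(y)) ≤ p(x,y) for all x, y ∈ X. If a ∈ X is a special limit of the orbit (f^i(x₀))_{i∈ℕ} (which is assumed to be a Cauchy sequence with central distance r = p(a,a)), then p(a, f(a)) = p(a,a). -/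
/-- If `f` is non-expansive and `a` is a special limit of the orbit of `f` at `x₀`,
then `p(a, f(a)) = p(a,a)`. -/
theorem nonexpansive_specialLimit {X : Type*} (p : X → X → ℝ)
    (hp : IsPartialMetric p) (x₀ : X) (f : X → X)
    (hf : ∀ x y : X, p (f x) (f y) ≤ p x y)
    (a : X)
    (hcauchy : IsCauchyWith p (fun i => f^[i] x₀) (p a a))
    (hlim : IsLimit p (fun i => f^[i] x₀) a) :
    p a (f a) = p a a := by
  obtain ⟨hlb, hsym, hsep, htri⟩ := hp
  refine le_antisymm ?_ (hlb a (f a))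
  refine le_of_forall_pos_le_add (fun ε hε => ?_)
  have hε3 : 0 < ε / 3 := by linarith
  obtain ⟨N₁, hN₁⟩ := hlim (ε / 3) hε3
  obtain ⟨N₂, hN₂⟩ := hcauchy (ε / 3) hε3
  set i := max N₁ N₂ + 1 with hi
  have hiN₁ : N₁ < i := Nat.lt_succ_of_le (le_max_left _ _)
  have hiN₂ : N₂ < i := Nat.lt_succ_of_le (le_max_right _ _)
  have h1 : p a (f^[i] x₀) - p a a < ε / 3 := hN₁ i hiN₁
  have h2 : p a (f^[i+1] x₀) - p a a < ε / 3 := hN₁ (i+1) (by omega)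
  have h3 : |p (f^[i+1] x₀) (f^[i+1] x₀) - p a a| < ε / 3 :=
    hN₂ (i+1) (i+1) (by omega) le_rfl
  have h3' : p a a - ε / 3 < p (f^[i+1] x₀) (f^[i+1] x₀) := by
    have := abs_lt.mp h3; linarith [this.1]
  have htr := htri a (f a) (f^[i+1] x₀)
  have hstep : p (f^[i+1] x₀) (f a) ≤ p a (f^[i] x₀) := by
    rw [Function.iterate_succ_apply']
    calc p (f (f^[i] x₀)) (f a) ≤ p (f^[i] x₀) a := hf _ _
    _ = p a (f^[i] x₀) := hsym _ _
  linarith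
end

section
/- Let p be a partial metric on a set X and x₀ ∈ X. Suppose f : X → X is such that the orbit (f^i(x₀))_{i∈ℕ} is a Cauchy sequence in (X,p) with some central distance r, f is non-expansive (p(f(x), f(y)) ≤ p(x,y) for all x, y ∈ X), f is weakly orbitally continuous at x₀ (whenever a is a special limit of (f^i(x₀)), f(a) is a limit of (f^i(x₀))), and (X,p) is complete (every Cauchy sequence in X has a special limit in X). Then f has a fixed point: there exists a ∈ X with f(a) = a. -/
/-- Fixed point theorem: a non-expansive, weakly orbitally continuous Cauchy function
on a complete partial metric space has a fixed point. -/
theorem fixedPoint_partialMetric {X : Type*} (p : X → X → ℝ)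
    (hp : IsPartialMetric p) (x₀ : X) (f : X → X) (r : ℝ)
    (hcauchy : IsCauchyWith p (fun i => f^[i] x₀) r)
    (hne : ∀ x y : X, p (f x) (f y) ≤ p x y)
    (hwoc : ∀ a : X, IsSpecialLimit p (fun i => f^[i] x₀) r a →
      IsLimit p (fun i => f^[i] x₀) (f a))
    (hcomplete : ∀ (x : ℕ → X) (r' : ℝ), IsCauchyWith p x r' →
      ∃ a : X, IsSpecialLimit p x r' a) :
    ∃ a : X, f a = a := by
  obtain ⟨hlb, hsym, hsep, hinq⟩ := hp
  obtain ⟨a, ha⟩ := hcomplete _ r hcauchy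
  have hlim := hwoc a ha
  have haa : p a a = r := ha.2
  set x : ℕ → X := fun i => f^[i] x₀ with hx
  -- p (f a) (f a) ≤ r
  have hfafa : p (f a) (f a) ≤ r := by
    refine le_of_forall_pos_le_add fun ε hε => ?_
    obtain ⟨N, hN⟩ := ha.1 ε hε
    have h1 : p (f a) (f a) ≤ p (f a) (x (N + 2)) := hlb _ _
    have h2 : p (f a) (x (N + 2)) ≤ p a (x (N + 1)) := by
      have : x (N + 2) = f (x (N + 1)) := Function.iterate_succ_apply' f (N + 1) x₀
      rw [this]; exact hne _ _
    have h3 : p a (x (N + 1)) < r + ε := by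
      have := hN (N + 1) (by omega)
      rw [haa] at this; linarith
    linarith
  -- p a (f a) ≤ p (f a) (f a) and p a (f a) ≤ r
  have key : ∀ ε : ℝ, 0 < ε → p a (f a) ≤ p (f a) (f a) + 3 * ε := by
    intro ε hε
    obtain ⟨N₁, hN₁⟩ := hcauchy ε hε
    obtain ⟨N₂, hN₂⟩ := ha.1 ε hε
    obtain ⟨N₃, hN₃⟩ := hlim ε hε
    set i := max N₁ (max N₂ N₃) + 1 with hi
    have hii : |p (x i) (x i) - r| < ε := hN₁ i i (by omega) le_rfl
    have h1 : p a (x i) < r + ε := by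
      have := hN₂ i (by omega); rw [haa] at this; linarith
    have h2 : p (f a) (x i) < p (f a) (f a) + ε := by
      have := hN₃ i (by omega); linarith
    have htri : p a (f a) ≤ p a (x i) + p (x i) (f a) - p (x i) (x i) :=
      hinq a (f a) (x i)
    have := abs_lt.mp hii
    rw [hsym (x i) (f a)] at htri
    linarith
  have h4 : p a (f a) ≤ p (f a) (f a) := by
    refine le_of_forall_pos_le_add fun ε hε => ?_
    have := key (ε / 3) (by linarith); linarith
  have h5 : p (f a) (f a) ≤ p a (f a) := by
    rw [hsym a (f a)]; exact hlb _ _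
  have h6 : p a a ≤ p a (f a) := hlb _ _
  have h7 : p a (f a) ≤ p a a := by rw [haa]; linarith
  have : a = f a := (hsep a (f a)).mp ⟨by linarith, by linarith⟩
  exact ⟨a, this.symm⟩
end
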